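/- arXiv:1210.3523 — 2 statements merged into one kernel-verified Lean document; each statement's English description precedes it below -/
import Mathlib

section
/- Let Δ ⊆ ℝⁿ be a compact polytope (the convex hull of finitely many points) and f : Δ → ℝ a nonnegative concave upper semicontinuous function. Then f is continuous on all of Δ, including the boundary. -/
/-!
Only lower semicontinuity is at stake. Fix `x` in the polytope `Δ = conv F` and `0 < θ ≤ 1`.
Every `y ∈ Δ` close enough to `x` can be written `y = (1 - θ) x + θ z` with `z ∈ Δ`: on the
standard simplex this is explicit, and compactness of the simplex lets one pass to `Δ` while
handling all barycentric representations of `x` at once. Concavity then gives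
`f y ≥ (1 - θ) f x + θ min_F f`, and by the minimum principle `min_F f` bounds `f` on `Δ`.
-/

open Filter Topology Set

theorem IsCompact.eventually_nhdsWithin_image {X Y : Type*} [TopologicalSpace X]
    [TopologicalSpace Y] [T2Space Y] {K : Set X} (hK : IsCompact K) {φ : X → Y}
    (hφ : ContinuousOn φ K) {P : Y → Prop} {y : Y}
    (h : ∀ x ∈ K, φ x = y → ∀ᶠ x' in 𝓝[K] x, P (φ x')) :
    ∀ᶠ y' in 𝓝[φ '' K] y, P y' := by
  by_contra hP
  set l := 𝓝[φ '' K] y ⊓ 𝓟 {y' | ¬P y'}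
  have hl : NeBot l := frequently_iff_neBot.1 (not_eventually.1 hP)
  have : NeBot (comap φ l ⊓ 𝓟 K) :=
    comap_inf_principal_neBot_of_image_mem hl (mem_inf_of_left self_mem_nhdsWithin)
  obtain ⟨x, hxK, hx⟩ := hK (f := comap φ l ⊓ 𝓟 K) inf_le_right
  have : NeBot (𝓝[K] x ⊓ comap φ l) := by
    have := hx.neBot
    rwa [← inf_assoc, inf_right_comm] at this
  have hlim : Tendsto φ (𝓝[K] x ⊓ comap φ l) (𝓝 (φ x) ⊓ l) :=
    Tendsto.inf (hφ x hxK) tendsto_comap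
  have hφx : φ x = y := eq_of_nhds_neBot <|
    hlim.neBot.mono (inf_le_inf_left _ (inf_le_left.trans nhdsWithin_le_nhds))
  have hno : ∀ᶠ x' in 𝓝[K] x ⊓ comap φ l, ¬P (φ x') :=
    hlim.eventually (mem_inf_of_right (mem_inf_of_right (mem_principal_self _)))
  exact (((h x hxK hφx).filter_mono inf_le_left).and hno).exists.elim fun _ h ↦ h.2 h.1

section StdSimplex

variable {ι : Type*} [Fintype ι]

theorem exists_mem_stdSimplex_smul_add_smul_eq {a w : ι → ℝ}
    (ha : a ∈ stdSimplex ℝ ι) (hw : w ∈ stdSimplex ℝ ι) {θ : ℝ} (hθ : 0 < θ)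
    (hle : ∀ i, (1 - θ) * a i ≤ w i) :
    ∃ u ∈ stdSimplex ℝ ι, (1 - θ) • a + θ • u = w := by
  refine ⟨θ⁻¹ • (w - (1 - θ) • a), ⟨fun i ↦ ?_, ?_⟩, ?_⟩
  · simpa using mul_nonneg (inv_nonneg.2 hθ.le) (sub_nonneg.2 (hle i))
  · simp only [Pi.smul_apply, Pi.sub_apply, smul_eq_mul, ← Finset.mul_sum,
      Finset.sum_sub_distrib, hw.2, ha.2]
    field_simp
    ring
  · rw [smul_smul, mul_inv_cancel₀ hθ.ne', one_smul, add_sub_cancel]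

theorem eventually_exists_stdSimplex_smul_add_smul_eq {a : ι → ℝ}
    (ha : a ∈ stdSimplex ℝ ι) {θ : ℝ} (hθ : 0 < θ) :
    ∀ᶠ w in 𝓝[stdSimplex ℝ ι] a, ∃ u ∈ stdSimplex ℝ ι, (1 - θ) • a + θ • u = w := by
  have hle : ∀ᶠ w in 𝓝[stdSimplex ℝ ι] a, ∀ i, (1 - θ) * a i ≤ w i := by
    refine eventually_all.2 fun i ↦ ?_
    rcases (ha.1 i).eq_or_lt with h0 | hpos
    · filter_upwards [self_mem_nhdsWithin] with w hw
      simpa [← h0] using hw.1 i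
    · have : (1 - θ) * a i < a i := by nlinarith
      exact ((continuous_apply i).tendsto a).eventually (eventually_ge_nhds this)
        |>.filter_mono nhdsWithin_le_nhds
  filter_upwards [self_mem_nhdsWithin, hle] with w hw hw_le
  exact exists_mem_stdSimplex_smul_add_smul_eq ha hw hθ hw_le

end StdSimplex

section ConvexHull

variable {E : Type*} [AddCommGroup E] [Module ℝ E] [TopologicalSpace E] [ContinuousAdd E]
  [ContinuousSMul ℝ E] [T2Space E]

theorem Set.Finite.eventually_exists_convexHull_smul_add_smul_eq
    {s : Set E} (hs : s.Finite) {x : E} (hx : x ∈ convexHull ℝ s) {θ : ℝ} (hθ : 0 < θ) :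
    ∀ᶠ y in 𝓝[convexHull ℝ s] x, ∃ z ∈ convexHull ℝ s, (1 - θ) • x + θ • z = y := by
  let := hs.fintype
  set φ : (s → ℝ) →ₗ[ℝ] E := ∑ v : s, (LinearMap.proj (R := ℝ) v).smulRight v.1
  have hφ : convexHull ℝ s = φ '' stdSimplex ℝ s := hs.convexHull_eq_image
  rw [hφ] at hx ⊢
  refine (isCompact_stdSimplex ℝ s).eventually_nhdsWithin_image
    φ.continuous_on_pi.continuousOn fun a ha hax ↦ ?_
  subst hax
  filter_upwards [eventually_exists_stdSimplex_smul_add_smul_eq ha hθ] with w hw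
  obtain ⟨u, hu, rfl⟩ := hw
  exact ⟨_, mem_image_of_mem _ hu, by rw [map_add, map_smul, map_smul]⟩

theorem ConcaveOn.lowerSemicontinuousOn_convexHull
    {s : Set E} (hs : s.Finite) {f : E → ℝ} (hf : ConcaveOn ℝ (convexHull ℝ s) f) :
    LowerSemicontinuousOn f (convexHull ℝ s) := by
  intro x hx c hc
  obtain ⟨m, hm⟩ := (hs.image f).bddBelow
  have hm_le : ∀ z ∈ convexHull ℝ s, m ≤ f z := fun z hz ↦
    let ⟨v, hv, hvz⟩ := hf.exists_le_of_mem_convexHull (subset_convexHull ℝ s) hz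
    (hm (mem_image_of_mem f hv)).trans hvz
  obtain ⟨θ, hc_lt, hθ, hθ_le⟩ : ∃ θ : ℝ, c < (1 - θ) * f x + θ * m ∧ θ ∈ Ioc 0 1 := by
    have : ∀ᶠ θ : ℝ in 𝓝 0, c < (1 - θ) * f x + θ * m :=
      (Continuous.tendsto (by fun_prop) 0).eventually (lt_mem_nhds (by simpa using hc))
    exact ((this.filter_mono nhdsWithin_le_nhds).and (Ioc_mem_nhdsGT one_pos)).exists
  filter_upwards [hs.eventually_exists_convexHull_smul_add_smul_eq hx hθ] with y hy
  obtain ⟨z, hz, rfl⟩ := hy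
  calc c < (1 - θ) * f x + θ * m := hc_lt
    _ ≤ (1 - θ) * f x + θ * f z := by gcongr; exact hm_le z hz
    _ ≤ f ((1 - θ) • x + θ • z) := hf.2 hx hz (by linarith) hθ.le (by ring)

end ConvexHull

theorem concaveOn_polytope_continuousOn_general {n : ℕ} (F : Finset (Fin n → ℝ))
    (Δ : Set (Fin n → ℝ)) (hΔ : Δ = convexHull ℝ (F : Set (Fin n → ℝ)))
    (f : (Fin n → ℝ) → ℝ)
    (hconc : ConcaveOn ℝ Δ f) (husc : UpperSemicontinuousOn f Δ) :
    ContinuousOn f Δ := by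
  subst hΔ
  exact continuousOn_iff_lower_upperSemicontinuousOn.2
    ⟨hconc.lowerSemicontinuousOn_convexHull F.finite_toSet, husc⟩

/-- Howe's theorem: a nonnegative concave upper semicontinuous function on a
compact polytope (convex hull of finitely many points of `ℝⁿ`) is continuous
on the whole polytope, including its boundary. -/
theorem concaveOn_polytope_continuousOn {n : ℕ} (F : Finset (Fin n → ℝ))
    (Δ : Set (Fin n → ℝ)) (hΔ : Δ = convexHull ℝ (F : Set (Fin n → ℝ)))
    (f : (Fin n → ℝ) → ℝ) (hnonneg : ∀ x ∈ Δ, 0 ≤ f x)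
    (hconc : ConcaveOn ℝ Δ f) (husc : UpperSemicontinuousOn f Δ) :
    ContinuousOn f Δ :=
  concaveOn_polytope_continuousOn_general F Δ hΔ f hconc husc
end

section
/- Let X be a smooth projective curve, p ∈ X, L a line bundle of positive degree d. Then d belongs to the set of normalized vanishing orders { ord_p(s)/m : 0 ≠ s ∈ H⁰(L^{⊗m}) } if and only if the degree-zero line bundle L ⊗ O_X(-d·p) is a torsion element of Pic⁰(X). -/
/-!
If `s = f` is a section of `L^{⊗m}`, its divisor `E = div f + m·D` is effective of degree `m·d`,
because principal divisors have degree zero. So `ord_p s = m·d` forces `E = m·d·p`, that is,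
`m·(D - d·p) = -div f` is principal; conversely, such an `f` is a section of `L^{⊗m}` vanishing
to order exactly `m·d` at `p`.
-/

open Function

theorem apply_eq_zero_of_finsum_eq_apply {α M : Type*} [AddCommMonoid M] [PartialOrder M]
    [IsOrderedCancelAddMonoid M] {E : α → M} (hE : HasFiniteSupport E) (hE0 : ∀ a, 0 ≤ E a)
    {p : α} (hsum : ∑ᶠ a, E a = E p) {q : α} (hq : q ≠ p) : E q = 0 := by
  classical
  have hpq : E p + E q ≤ E p :=
    calc E p + E q = ∑ a ∈ {p, q}, E a := (Finset.sum_pair hq.symm).symm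
      _ ≤ ∑ a ∈ hE.toFinset ∪ {p, q}, E a :=
        Finset.sum_le_sum_of_subset_of_nonneg Finset.subset_union_right fun a _ _ => hE0 a
      _ = E p := by
        rw [← finsum_eq_sum_of_support_subset E fun a ha =>
          Finset.mem_union_left _ ((Set.Finite.mem_toFinset hE).2 ha), hsum]
  exact le_antisymm (by simpa using hpq) (hE0 q)

theorem finsum_add_mul_eq_of_finsum_eq_zero {P : Type*} {g : P → ℤ} (hg : HasFiniteSupport g)
    (hg0 : ∑ᶠ q, g q = 0) (D : P →₀ ℤ) (n : ℤ) :
    ∑ᶠ q, (g q + n * D q) = n * D.sum fun _ k => k := by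
  have hnD : HasFiniteSupport fun q => n * D q := by fun_prop
  have hD : ∑ᶠ q, D q = D.sum fun _ k => k :=
    finsum_eq_sum_of_support_subset _ (Finsupp.fun_support_eq D).subset
  rw [finsum_add_distrib hg hnD, hg0, zero_add, ← mul_finsum, hD]

theorem degree_is_vanishing_order_iff_torsion_general
    {K : Type} [Field K] {P : Type} [DecidableEq P]
    (ord : P → K → ℤ)
    (hfin : ∀ f : K, f ≠ 0 → (Function.support fun q => ord q f).Finite)
    (hdeg0 : ∀ f : K, f ≠ 0 → (finsum fun q => ord q f) = 0)
    (D : P →₀ ℤ) (p : P) (d : ℤ)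
    (hd : d = D.sum fun _ n => n) (hdpos : 0 < d) :
    (∃ m : ℕ, 1 ≤ m ∧ ∃ f : K, f ≠ 0 ∧
        (∀ q : P, 0 ≤ ord q f + (m : ℤ) * D q) ∧
        ord p f + (m : ℤ) * D p = (m : ℤ) * d) ↔
    (∃ m : ℕ, 1 ≤ m ∧ ∃ f : K, f ≠ 0 ∧
        ∀ q : P, ord q f = (m : ℤ) * ((if q = p then d else 0) - D q)) := by
  constructor
  · rintro ⟨m, hm, f, hf, heff, hp⟩
    refine ⟨m, hm, f, hf, fun q => ?_⟩
    set E : P → ℤ := fun q => ord q f + (m : ℤ) * D q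
    have hEfin : HasFiniteSupport E :=
      HasFiniteSupport.add (hfin f hf) (D.hasFiniteSupport.mul_right _)
    have hdegE : ∑ᶠ q, E q = E p := by
      rw [finsum_add_mul_eq_of_finsum_eq_zero (hfin f hf) (hdeg0 f hf), ← hd]
      exact hp.symm
    rcases eq_or_ne q p with rfl | hq
    · rw [if_pos rfl]
      linarith
    · have hEq : E q = 0 := apply_eq_zero_of_finsum_eq_apply hEfin heff hdegE hq
      rw [if_neg hq]
      linarith [show ord q f + m * D q = 0 from hEq]
  · rintro ⟨m, hm, f, hf, hdiv⟩
    refine ⟨m, hm, f, hf, fun q => ?_, by rw [hdiv p, if_pos rfl]; ring⟩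
    rw [hdiv q]
    split_ifs
    · ring_nf
      positivity
    · simp

/-- On a smooth projective curve (encoded via its function field `K`, its
points `P` and the normalized geometric valuations `ord q` as in the product
formula model), for a line bundle given by a divisor `D : P →₀ ℤ` of degree
`d > 0` and a point `p`, the number `d` is a normalized vanishing order
(`d = ord_p(s)/m` for some nonzero section `s` of `L^{⊗m}`) if and only if the
degree-zero bundle `L ⊗ O(-d·p)`, i.e. the divisor class of `D - d·p`, is
torsion in `Pic⁰`: some positive multiple `m·(D - d·p)` is principal. -/
theorem degree_is_vanishing_order_iff_torsion
    {K : Type} [Field K] [Algebra ℂ K] {P : Type} [DecidableEq P]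
    (ord : P → K → ℤ)
    (hord_mul : ∀ (q : P) (f g : K), f ≠ 0 → g ≠ 0 →
      ord q (f * g) = ord q f + ord q g)
    (hconst : ∀ c : ℂ, c ≠ 0 → ∀ q : P, ord q (algebraMap ℂ K c) = 0)
    (hsurj : ∀ q : P, ∃ f : K, f ≠ 0 ∧ ord q f = 1)
    (hfin : ∀ f : K, f ≠ 0 → (Function.support fun q => ord q f).Finite)
    (hdeg0 : ∀ f : K, f ≠ 0 → (finsum fun q => ord q f) = 0)
    (D : P →₀ ℤ) (p : P) (d : ℤ)
    (hd : d = D.sum fun _ n => n) (hdpos : 0 < d) :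
    (∃ m : ℕ, 1 ≤ m ∧ ∃ f : K, f ≠ 0 ∧
        (∀ q : P, 0 ≤ ord q f + (m : ℤ) * D q) ∧
        ord p f + (m : ℤ) * D p = (m : ℤ) * d) ↔
    (∃ m : ℕ, 1 ≤ m ∧ ∃ f : K, f ≠ 0 ∧
        ∀ q : P, ord q f = (m : ℤ) * ((if q = p then d else 0) - D q)) :=
  degree_is_vanishing_order_iff_torsion_general ord hfin hdeg0 D p d hd hdpos
end
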